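/- arXiv:2101.01816 — 2 statements merged into one kernel-verified Lean document; each statement's English description precedes it below -/
import Mathlib

section
/- Under ELF with m events, the probability that forecaster i is selected, given true joint distribution θ over outcomes, equals 1/n + (1/n)(R(y_i,θ) - (1/(n-1))·Σ_{j≠i} R(y_j,θ)), where R(y_i,θ) denotes the expected average score of forecaster i. Consequently, forecaster i is selected with strictly higher probability than forecaster j if and only if R(y_i,θ) > R(y_j,θ). -/
open Finset

/-- Multi-event ELF selection probability of forecaster `i` given outcomes `x`. -/
noncomputable def elfMultiProb (n m : ℕ) (R : ℝ → Bool → ℝ)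
    (y : Fin n → Fin m → ℝ) (x : Fin m → Bool) (i : Fin n) : ℝ :=
  (1 / m) * ∑ k, (1 / n + (1 / n) *
    (R (y i k) (x k) - (1 / (n - 1)) * ∑ j ∈ univ.erase i, R (y j k) (x k)))

/-- Expected average score of forecaster `i` under joint outcome distribution `θ`. -/
noncomputable def expScore (n m : ℕ) (R : ℝ → Bool → ℝ)
    (y : Fin n → Fin m → ℝ) (θ : (Fin m → Bool) → ℝ) (i : Fin n) : ℝ :=
  ∑ x : Fin m → Bool, θ x * ((1 / m) * ∑ k, R (y i k) (x k))

/-!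
For a single event, the ELF selection probability is an affine function of the forecasters'
scores, and an affine function commutes with averaging against weights that sum to one.
Averaging over the `m` events and then over outcomes drawn from `θ` therefore yields the
single-event formula evaluated at the expected scores. As the others' scores sum to the
total minus one's own, two selection probabilities differ by `(s i - s j) / (n - 1)`.
-/

noncomputable def elfProb (n : ℕ) (s : Fin n → ℝ) (i : Fin n) : ℝ :=
  1 / n + (1 / n) * (s i - (1 / (n - 1)) * ∑ j ∈ univ.erase i, s j)

section elfProb

variable {n : ℕ}

theorem sum_mul_elfProb {α : Type*} (t : Finset α) (w : α → ℝ) (hw : ∑ a ∈ t, w a = 1)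
    (s : α → Fin n → ℝ) (i : Fin n) :
    ∑ a ∈ t, w a * elfProb n (s a) i = elfProb n (fun j => ∑ a ∈ t, w a * s a j) i := by
  have hswap : ∑ a ∈ t, w a * ∑ j ∈ univ.erase i, s a j
      = ∑ j ∈ univ.erase i, ∑ a ∈ t, w a * s a j := by
    simp only [mul_sum]
    exact sum_comm
  calc ∑ a ∈ t, w a * elfProb n (s a) i
      = ∑ a ∈ t, (w a * (1 / n) + (1 / n) * (w a * s a i)
          - (1 / n) * (1 / ((n : ℝ) - 1)) * (w a * ∑ j ∈ univ.erase i, s a j)) := by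
        refine sum_congr rfl fun a _ => ?_
        rw [elfProb]
        ring
    _ = (∑ a ∈ t, w a) * (1 / n) + (1 / n) * ∑ a ∈ t, w a * s a i
          - (1 / n) * (1 / ((n : ℝ) - 1)) * ∑ a ∈ t, w a * ∑ j ∈ univ.erase i, s a j := by
        rw [sum_sub_distrib, sum_add_distrib, ← sum_mul, ← mul_sum, ← mul_sum]
    _ = elfProb n (fun j => ∑ a ∈ t, w a * s a j) i := by
        rw [hw, hswap, elfProb]
        ring

theorem elfProb_sub_elfProb (hn : (n : ℝ) ≠ 1) (s : Fin n → ℝ) (i j : Fin n) :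
    elfProb n s i - elfProb n s j = (s i - s j) / (n - 1) := by
  have hn0 : (n : ℝ) ≠ 0 := Nat.cast_ne_zero.mpr i.pos.ne'
  have hn1 : (n : ℝ) - 1 ≠ 0 := sub_ne_zero.mpr hn
  simp only [elfProb, sum_erase_eq_sub (mem_univ _)]
  field_simp
  ring

theorem elfProb_lt_elfProb_iff (hn : 2 ≤ n) (s : Fin n → ℝ) (i j : Fin n) :
    elfProb n s i < elfProb n s j ↔ s i < s j := by
  have hn1 : (0 : ℝ) < n - 1 := by
    have : (2 : ℝ) ≤ n := by exact_mod_cast hn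
    linarith
  rw [← sub_neg, elfProb_sub_elfProb (by linarith), div_lt_iff₀ hn1, zero_mul, sub_neg]

end elfProb

section elfMultiProb

variable {n m : ℕ} (R : ℝ → Bool → ℝ) (y : Fin n → Fin m → ℝ)

theorem elfMultiProb_eq_elfProb (hm : m ≠ 0) (x : Fin m → Bool) (i : Fin n) :
    elfMultiProb n m R y x i = elfProb n (fun j => (1 / m) * ∑ k, R (y j k) (x k)) i := by
  have hw : ∑ _k : Fin m, (1 / m : ℝ) = 1 := by
    rw [sum_const, card_univ, Fintype.card_fin, nsmul_eq_mul]
    field_simp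
  have h := sum_mul_elfProb univ _ hw (fun k j => R (y j k) (x k)) i
  simp only [← mul_sum] at h
  exact h

theorem sum_mul_elfMultiProb (hm : m ≠ 0) (θ : (Fin m → Bool) → ℝ) (hθ1 : ∑ x, θ x = 1)
    (i : Fin n) :
    ∑ x, θ x * elfMultiProb n m R y x i = elfProb n (expScore n m R y θ) i := by
  simp only [elfMultiProb_eq_elfProb R y hm]
  exact sum_mul_elfProb univ θ hθ1 _ i

end elfMultiProb

theorem elf_rank_accuracy_general (n m : ℕ) (hn : 2 ≤ n) (hm : 1 ≤ m)
    (R : ℝ → Bool → ℝ)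
    (y : Fin n → Fin m → ℝ)
    (θ : (Fin m → Bool) → ℝ) (hθ1 : ∑ x, θ x = 1) :
    (∀ i : Fin n,
      ∑ x : Fin m → Bool, θ x * elfMultiProb n m R y x i =
        1 / n + (1 / n) * (expScore n m R y θ i
          - (1 / (n - 1)) * ∑ j ∈ univ.erase i, expScore n m R y θ j)) ∧
    (∀ i j : Fin n,
      expScore n m R y θ i > expScore n m R y θ j ↔
        ∑ x : Fin m → Bool, θ x * elfMultiProb n m R y x i >
        ∑ x : Fin m → Bool, θ x * elfMultiProb n m R y x j) := by
  have hm0 : m ≠ 0 := by omega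
  refine ⟨sum_mul_elfMultiProb R y hm0 θ hθ1, fun i j => ?_⟩
  rw [sum_mul_elfMultiProb R y hm0 θ hθ1, sum_mul_elfMultiProb R y hm0 θ hθ1]
  exact (elfProb_lt_elfProb_iff hn _ j i).symm

/-- Under ELF, the probability that forecaster `i` is selected given the true joint
distribution `θ` equals `1/n + (1/n)(R(y_i,θ) - (1/(n-1)) ∑_{j≠i} R(y_j,θ))`;
consequently, `i` is selected with strictly higher probability than `j` iff
`R(y_i,θ) > R(y_j,θ)` (rank accuracy). -/
theorem elf_rank_accuracy (n m : ℕ) (hn : 2 ≤ n) (hm : 1 ≤ m)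
    (R : ℝ → Bool → ℝ)
    (hR : ∀ y ∈ Set.Icc (0:ℝ) 1, ∀ x : Bool, R y x ∈ Set.Icc (0:ℝ) 1)
    (y : Fin n → Fin m → ℝ) (hy : ∀ i k, y i k ∈ Set.Icc (0:ℝ) 1)
    (θ : (Fin m → Bool) → ℝ) (hθ0 : ∀ x, 0 ≤ θ x) (hθ1 : ∑ x, θ x = 1) :
    (∀ i : Fin n,
      ∑ x : Fin m → Bool, θ x * elfMultiProb n m R y x i =
        1 / n + (1 / n) * (expScore n m R y θ i
          - (1 / (n - 1)) * ∑ j ∈ univ.erase i, expScore n m R y θ j)) ∧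
    (∀ i j : Fin n,
      expScore n m R y θ i > expScore n m R y θ j ↔
        ∑ x : Fin m → Bool, θ x * elfMultiProb n m R y x i >
        ∑ x : Fin m → Bool, θ x * elfMultiProb n m R y x j) :=
  elf_rank_accuracy_general n m hn hm R y θ hθ1
end

section
/- If Π_i(y_1,y_2,x) = 1/2 + R(y_i,x) - R(y_{3-i},x) defines a wagering mechanism with payments in [0,1] for a strictly proper scoring rule R, then the rescaled rule R'(y,x) = 2(R(y,x) + β(x)) with β(0) = -R(1,0), β(1) = -R(0,1) is strictly proper, takes values in [0,1], and satisfies Π_i(y_1,y_2,x) = 1/2 + (1/2)(R'(y_i,x) - R'(y_{3-i},x)). -/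
open Set

def expectedScore (S : ℝ → Bool → ℝ) (p y : ℝ) : ℝ :=
  p * S y true + (1 - p) * S y false

def IsStrictlyProper (S : ℝ → Bool → ℝ) : Prop :=
  ∀ p ∈ Icc (0:ℝ) 1, ∀ y ∈ Icc (0:ℝ) 1, y ≠ p → expectedScore S p y < expectedScore S p p

theorem expectedScore_affine (S : ℝ → Bool → ℝ) (α : ℝ) (β : Bool → ℝ) (p y : ℝ) :
    expectedScore (fun y x => α * (S y x + β x)) p y =
      α * (expectedScore S p y + (p * β true + (1 - p) * β false)) := by
  simp only [expectedScore]
  ring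

namespace IsStrictlyProper

variable {S : ℝ → Bool → ℝ}

theorem affine (hS : IsStrictlyProper S) {α : ℝ} (hα : 0 < α) (β : Bool → ℝ) :
    IsStrictlyProper fun y x => α * (S y x + β x) := by
  intro p hp y hy hne
  rw [expectedScore_affine, expectedScore_affine]
  gcongr
  exact hS p hp y hy hne

/-- Properness at belief `0` gives `S y false < S 0 false`; at belief `y` this forces
`S 0 true < S y true` when `y ≠ 0`. -/
theorem apply_zero_true_le (hS : IsStrictlyProper S) {y : ℝ} (hy : y ∈ Icc (0:ℝ) 1) :
    S 0 true ≤ S y true := by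
  rcases eq_or_ne y 0 with rfl | hy0
  · exact le_rfl
  have h0 := hS 0 (left_mem_Icc.2 zero_le_one) y hy hy0
  have hy' := hS y hy 0 (left_mem_Icc.2 zero_le_one) hy0.symm
  simp only [expectedScore] at h0 hy'
  nlinarith [hy.1, hy.2, lt_of_le_of_ne hy.1 hy0.symm]

theorem apply_one_false_le (hS : IsStrictlyProper S) {y : ℝ} (hy : y ∈ Icc (0:ℝ) 1) :
    S 1 false ≤ S y false := by
  rcases eq_or_ne y 1 with rfl | hy1
  · exact le_rfl
  have h1 := hS 1 (right_mem_Icc.2 zero_le_one) y hy hy1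
  have hy' := hS y hy 1 (right_mem_Icc.2 zero_le_one) hy1.symm
  simp only [expectedScore] at h1 hy'
  nlinarith [hy.1, hy.2, lt_of_le_of_ne hy.2 hy1]

end IsStrictlyProper

/-- If `Π_i(y₁,y₂,x) = 1/2 + R(y_i,x) - R(y_{3-i},x)` has payments in `[0,1]` for a
strictly proper scoring rule `R`, then `R'(y,x) = 2(R(y,x) + β(x))` with
`β(0) = -R(1,0)`, `β(1) = -R(0,1)` is strictly proper, takes values in `[0,1]`, and
satisfies `Π_i = 1/2 + (1/2)(R'(y_i,x) - R'(y_{3-i},x))`. -/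
theorem rescale_to_normalized_rule (R : ℝ → Bool → ℝ)
    (hproper : ∀ p ∈ Set.Icc (0:ℝ) 1, ∀ y ∈ Set.Icc (0:ℝ) 1, y ≠ p →
      p * R p true + (1 - p) * R p false > p * R y true + (1 - p) * R y false)
    (hpay : ∀ y₁ ∈ Set.Icc (0:ℝ) 1, ∀ y₂ ∈ Set.Icc (0:ℝ) 1, ∀ x : Bool,
      1 / 2 + R y₁ x - R y₂ x ∈ Set.Icc (0:ℝ) 1) :
    let R' : ℝ → Bool → ℝ := fun y x => 2 * (R y x + (if x then -(R 0 true) else -(R 1 false)))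
    (∀ p ∈ Set.Icc (0:ℝ) 1, ∀ y ∈ Set.Icc (0:ℝ) 1, y ≠ p →
      p * R' p true + (1 - p) * R' p false > p * R' y true + (1 - p) * R' y false) ∧
    (∀ y ∈ Set.Icc (0:ℝ) 1, ∀ x : Bool, R' y x ∈ Set.Icc (0:ℝ) 1) ∧
    (∀ y₁ ∈ Set.Icc (0:ℝ) 1, ∀ y₂ ∈ Set.Icc (0:ℝ) 1, ∀ x : Bool,
      1 / 2 + R y₁ x - R y₂ x = 1 / 2 + (1 / 2) * (R' y₁ x - R' y₂ x)) := by
  intro R'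
  have hR : IsStrictlyProper R := hproper
  refine ⟨hR.affine two_pos fun x => if x then -R 0 true else -R 1 false, fun y hy x => ?_,
    fun y₁ _ y₂ _ x => by simp only [R']; ring⟩
  have hzero := left_mem_Icc.2 (zero_le_one' ℝ)
  have hone := right_mem_Icc.2 (zero_le_one' ℝ)
  -- `R' y x` is twice the distance of `R y x` above its minimum, which the payment bound
  -- against the minimising forecast caps at `1/2`.
  cases x
  · have hmin := hR.apply_one_false_le hy
    have hbound := (hpay y hy 1 hone false).2
    simp only [R', Bool.false_eq_true, if_false, mem_Icc]
    constructor <;> linarith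
  · have hmin := hR.apply_zero_true_le hy
    have hbound := (hpay y hy 0 hzero true).2
    simp only [R', if_true, mem_Icc]
    constructor <;> linarith
end
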